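/- arXiv:0907.3188 — 2 statements merged into one kernel-verified Lean document; each statement's English description precedes it below -/
import Mathlib

section
/- If t is a positive integer with t ≡ 12 (mod 18), then a₃(t) = (2t² − 32t + 96)/9. -/
/-- A 3×3 magic square with magic sum `t`: pairwise distinct positive integer entries,
all row sums, column sums, and both main diagonal sums equal to `t`. -/
def IsMagicSquare3 (t : ℕ) (M : Matrix (Fin 3) (Fin 3) ℕ) : Prop :=
  (∀ i j, 0 < M i j) ∧
  (Function.Injective fun p : Fin 3 × Fin 3 => M p.1 p.2) ∧
  (∀ i, ∑ j, M i j = t) ∧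
  (∀ j, ∑ i, M i j = t) ∧
  M 0 0 + M 1 1 + M 2 2 = t ∧
  M 0 2 + M 1 1 + M 2 0 = t

/-- The number of 3×3 magic squares with magic sum `t`. -/
noncomputable def a3 (t : ℕ) : ℕ := Set.ncard {M : Matrix (Fin 3) (Fin 3) ℕ | IsMagicSquare3 t M}

/-!
A magic square with sum `t` has `t = 3c`, `c` its centre, and is determined by
`(a, b) = (M 0 0 - c, M 0 2 - c)`: its entries are `c + αa + βb` with `(α, β)` running over
`{-1, 0, 1}²`. So the entries are positive iff `|a| + |b| < c`, and pairwise distinct iff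
`(a, b)` is orthogonal to no difference of two points of `{-1, 0, 1}²`, i.e. lies on none of the
lines `a = 0`, `b = 0`, `a = ±b`, `b = ±2a`, `a = ±2b`. Hence, with `m = c - 1`, `a₃(3c)` counts
the `(m + 1)² + m²` lattice points of the diamond `|a| + |b| ≤ m` minus the origin and the points
on those lines; a line with primitive direction `d` carries `2 ⌊m / (|d₁| + |d₂|)⌋` of them.
For `t = 18k + 12` we get `m = 6k + 3`.
-/

open Finset

theorem IsCoprime.exists_eq_mul_of_mul_eq_mul {R : Type*} [CommRing R] {e₁ e₂ a b : R}
    (h : IsCoprime e₁ e₂) (hab : e₂ * a = e₁ * b) : ∃ x, a = x * e₁ ∧ b = x * e₂ := by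
  obtain ⟨u, v, huv⟩ := h
  exact ⟨u * a + v * b, by linear_combination (-a) * huv + v * hab,
    by linear_combination (-b) * huv - u * hab⟩

theorem eq_zero_of_mul_eq_mul_of_mul_eq_mul {R : Type*} [CommRing R] [NoZeroDivisors R]
    {d e : R × R} {a b : R} (hd : d.2 * a = d.1 * b) (he : e.2 * a = e.1 * b)
    (hde : d.1 * e.2 ≠ d.2 * e.1) : a = 0 ∧ b = 0 := by
  have hde' : d.1 * e.2 - d.2 * e.1 ≠ 0 := sub_ne_zero.mpr hde
  refine ⟨(mul_eq_zero.mp ?_).resolve_left hde', (mul_eq_zero.mp ?_).resolve_left hde'⟩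
  · linear_combination d.1 * he - e.1 * hd
  · linear_combination d.2 * he - e.2 * hd

noncomputable def diamond (m : ℕ) : Finset (ℤ × ℤ) :=
  (Icc (-(m : ℤ)) m ×ˢ Icc (-(m : ℤ)) m).filter fun p => p.1.natAbs + p.2.natAbs ≤ m

@[simp]
lemma mem_diamond {m : ℕ} {p : ℤ × ℤ} : p ∈ diamond m ↔ p.1.natAbs + p.2.natAbs ≤ m := by
  simp only [diamond, mem_filter, mem_product, mem_Icc, and_iff_right_iff_imp]
  omega

lemma card_diamond (m : ℕ) : #(diamond m) = (m + 1) ^ 2 + m ^ 2 := by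
  suffices #(diamond m) = #((range (m + 1) ×ˢ range (m + 1)).disjSum (range m ×ˢ range m)) by
    simp [this, card_disjSum, sq]
  -- `(a, b) ↦ (a + b, a - b)` maps the diamond onto the points of `[-m, m]²` whose coordinates
  -- have equal parity: two interleaved square grids, of sides `m + 1` and `m`.
  let toGrid (p : ℤ × ℤ) : (ℕ × ℕ) ⊕ (ℕ × ℕ) :=
    let q := (((p.1 + p.2 + m) / 2).toNat, ((p.1 - p.2 + m) / 2).toNat)
    if (p.1 + p.2 + m) % 2 = 0 then .inl q else .inr q
  let ofGrid : (ℕ × ℕ) ⊕ (ℕ × ℕ) → ℤ × ℤ :=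
    Sum.elim (fun q => (q.1 + q.2 - m, q.1 - q.2)) (fun q => (q.1 + q.2 + 1 - m, q.1 - q.2))
  refine card_nbij' toGrid ofGrid ?_ ?_ ?_ ?_
  · rintro ⟨a, b⟩ h
    simp only [toGrid, mem_coe, mem_diamond] at h ⊢
    split_ifs <;> simp only [inl_mem_disjSum, inr_mem_disjSum, mem_product, mem_range] <;> omega
  · rintro (⟨i, j⟩ | ⟨i, j⟩) h <;>
      simp only [ofGrid, mem_coe, inl_mem_disjSum, inr_mem_disjSum, mem_product, mem_range,
        mem_diamond, Sum.elim_inl, Sum.elim_inr] at h ⊢ <;> omega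
  · rintro ⟨a, b⟩ h
    simp only [toGrid, mem_coe, mem_diamond] at h ⊢
    split_ifs <;> simp only [ofGrid, Sum.elim_inl, Sum.elim_inr, Prod.mk.injEq] <;> omega
  · rintro (⟨i, j⟩ | ⟨i, j⟩) h <;>
      simp only [ofGrid, toGrid, Sum.elim_inl, Sum.elim_inr] <;> split_ifs <;>
      (try simp only [Sum.inl.injEq, Sum.inr.injEq, Prod.mk.injEq]) <;> omega

noncomputable def diamondRay (m : ℕ) (d : ℤ × ℤ) : Finset (ℤ × ℤ) :=
  (diamond m).filter fun p => p ≠ 0 ∧ d.2 * p.1 = d.1 * p.2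

lemma card_diamondRay (m : ℕ) {d : ℤ × ℤ} (hd : IsCoprime d.1 d.2) :
    #(diamondRay m d) = 2 * (m / (d.1.natAbs + d.2.natAbs)) := by
  set r := m / (d.1.natAbs + d.2.natAbs)
  have hd0 : d.1 ≠ 0 ∨ d.2 ≠ 0 := by
    by_contra! h0
    exact not_isCoprime_zero_zero (h0.1 ▸ h0.2 ▸ hd)
  have hmem (x : ℤ) : (x * d.1, x * d.2) ∈ diamond m ↔ x.natAbs ≤ r := by
    rw [mem_diamond, Nat.le_div_iff_mul_le (by omega), Int.natAbs_mul, Int.natAbs_mul, mul_add]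
  have hray : diamondRay m d = ((Icc (-(r : ℤ)) r).erase 0).image fun x => (x * d.1, x * d.2) := by
    ext p
    simp only [diamondRay, mem_filter, mem_image, mem_erase, mem_Icc]
    constructor
    · rintro ⟨hp, hp0, hline⟩
      obtain ⟨x, h1, h2⟩ := hd.exists_eq_mul_of_mul_eq_mul hline
      obtain rfl : p = (x * d.1, x * d.2) := Prod.ext h1 h2
      refine ⟨x, ⟨?_, ?_⟩, rfl⟩
      · rintro rfl
        simp at hp0
      · have := (hmem x).mp hp
        omega
    · rintro ⟨x, ⟨hx0, hx⟩, rfl⟩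
      refine ⟨(hmem x).mpr (by omega), ?_, by ring⟩
      rcases hd0 with h | h <;> simp [Prod.ext_iff, hx0, h]
  rw [hray, card_image_of_injective, card_erase_of_mem (by simp), Int.card_Icc]
  · omega
  · intro x y hxy
    rcases hd0 with h | h
    · exact mul_right_cancel₀ h (Prod.ext_iff.mp hxy).1
    · exact mul_right_cancel₀ h (Prod.ext_iff.mp hxy).2

-- `Int.toNat` truncates, harmlessly on `magicParams`, where every entry is positive.
def magicSquareOf (c : ℤ) (p : ℤ × ℤ) : Matrix (Fin 3) (Fin 3) ℕ :=
  !![(c + p.1).toNat, (c - p.1 - p.2).toNat, (c + p.2).toNat;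
     (c - p.1 + p.2).toNat, c.toNat, (c + p.1 - p.2).toNat;
     (c - p.2).toNat, (c + p.1 + p.2).toNat, (c - p.1).toNat]

namespace IsMagicSquare3

variable {t : ℕ} {M : Matrix (Fin 3) (Fin 3) ℕ}

-- The middle row, the middle column and the two diagonals cover every cell once and the
-- centre three more times.
lemma eq_three_mul_center (h : IsMagicSquare3 t M) : t = 3 * M 1 1 := by
  obtain ⟨-, -, hrow, hcol, hdiag, hanti⟩ := h
  simp only [Fin.sum_univ_three] at hrow hcol
  have := hrow 0; have := hrow 1; have := hrow 2; have := hcol 1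
  omega

lemma magicSquareOf_eq (h : IsMagicSquare3 t M) :
    magicSquareOf (M 1 1) (M 0 0 - M 1 1, M 0 2 - M 1 1) = M := by
  have hc := h.eq_three_mul_center
  obtain ⟨-, -, hrow, hcol, hdiag, hanti⟩ := h
  simp only [Fin.sum_univ_three] at hrow hcol
  have := hrow 0; have := hrow 1; have := hrow 2
  have := hcol 0; have := hcol 1; have := hcol 2
  ext i j
  fin_cases i <;> fin_cases j <;> simp [magicSquareOf] <;> omega

end IsMagicSquare3

def collisionDirections : Finset (ℤ × ℤ) :=
  {(1, 0), (0, 1), (1, 1), (1, -1), (1, 2), (1, -2), (2, 1), (2, -1)}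

noncomputable def magicParams (m : ℕ) : Finset (ℤ × ℤ) :=
  (diamond m).filter fun p => ¬∃ d ∈ collisionDirections, d.2 * p.1 = d.1 * p.2

lemma isMagicSquare3_magicSquareOf_iff (m : ℕ) (p : ℤ × ℤ) :
    IsMagicSquare3 (3 * (m + 1)) (magicSquareOf (m + 1) p) ↔ p ∈ magicParams m := by
  obtain ⟨a, b⟩ := p
  simp only [magicParams, mem_filter, mem_diamond, collisionDirections, mem_insert,
    mem_singleton, exists_eq_or_imp, exists_eq_left, not_or]
  constructor
  · rintro ⟨hpos, hinj, -⟩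
    have hne (i j i' j' : Fin 3) (hij : (i, j) ≠ (i', j')) :
        magicSquareOf (m + 1) (a, b) i j ≠ magicSquareOf (m + 1) (a, b) i' j' :=
      hinj.ne hij
    have := hpos 0 0; have := hpos 0 1; have := hpos 0 2; have := hpos 1 0
    have := hpos 1 2; have := hpos 2 0; have := hpos 2 1; have := hpos 2 2
    -- `b = 0`, `a = 0`, `a = b`, `a = -b`, `b = 2a`, `b = -2a`, `a = 2b`, `a = -2b` would
    -- make the following pairs of entries equal, in this order.
    have := hne 0 0 1 2 (by decide); have := hne 0 0 1 1 (by decide)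
    have := hne 0 0 0 2 (by decide); have := hne 0 2 2 2 (by decide)
    have := hne 0 0 1 0 (by decide); have := hne 0 0 0 1 (by decide)
    have := hne 0 2 1 2 (by decide); have := hne 0 1 0 2 (by decide)
    clear hne hinj hpos
    simp only [magicSquareOf, Matrix.of_apply, Matrix.cons_val,
      Fin.isValue, Int.lt_toNat, Nat.cast_zero] at *
    omega
  · intro h
    refine ⟨?_, ?_, ?_, ?_, ?_, ?_⟩
    · intro i j
      fin_cases i <;> fin_cases j <;> simp [magicSquareOf] <;> omega
    · rintro ⟨i, j⟩ ⟨i', j'⟩ he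
      fin_cases i <;> fin_cases j <;> fin_cases i' <;> fin_cases j' <;>
        first | rfl | (simp [magicSquareOf] at he; omega)
    · intro i
      fin_cases i <;> simp [magicSquareOf, Fin.sum_univ_three] <;> omega
    · intro j
      fin_cases j <;> simp [magicSquareOf, Fin.sum_univ_three] <;> omega
    · simp only [magicSquareOf, Matrix.of_apply, Matrix.cons_val, Fin.isValue]
      omega
    · simp only [magicSquareOf, Matrix.of_apply, Matrix.cons_val, Fin.isValue]
      omega

lemma magicSquareOf_injOn (m : ℕ) : Set.InjOn (magicSquareOf (m + 1)) (magicParams m) := by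
  rintro ⟨a, b⟩ hp ⟨a', b'⟩ hq he
  simp only [magicParams, coe_filter, mem_diamond, Set.mem_ofPred_eq] at hp hq
  have h00 := congrFun (congrFun he 0) 0
  have h02 := congrFun (congrFun he 0) 2
  simp only [magicSquareOf, Matrix.of_apply, Matrix.cons_val, Fin.isValue] at h00 h02
  ext <;> omega

theorem a3_three_mul_succ_eq_card (m : ℕ) : a3 (3 * (m + 1)) = #(magicParams m) := by
  have hset : {M | IsMagicSquare3 (3 * (m + 1)) M} = magicSquareOf (m + 1) '' magicParams m := by
    ext M
    simp only [Set.mem_ofPred_eq, Set.mem_image, mem_coe]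
    constructor
    · intro hM
      have hc : (M 1 1 : ℤ) = m + 1 := by
        have := hM.eq_three_mul_center
        omega
      have hM' := hM.magicSquareOf_eq
      rw [hc] at hM'
      refine ⟨_, ?_, hM'⟩
      rwa [← isMagicSquare3_magicSquareOf_iff, hM']
    · rintro ⟨p, hp, rfl⟩
      exact (isMagicSquare3_magicSquareOf_iff m p).mpr hp
  rw [a3, hset, (magicSquareOf_injOn m).ncard_image, Set.ncard_coe_finset]

lemma diamond_filter_collinear (m : ℕ) :
    (diamond m).filter (fun p => ∃ d ∈ collisionDirections, d.2 * p.1 = d.1 * p.2) =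
      insert 0 (collisionDirections.biUnion (diamondRay m)) := by
  ext p
  simp only [mem_filter, mem_insert, mem_biUnion, diamondRay]
  by_cases hp : p = 0
  · subst hp
    simp only [true_or, iff_true]
    exact ⟨by simp, (1, 0), by simp [collisionDirections], by simp⟩
  · simp only [hp, false_or, ne_eq, not_false_eq_true, true_and]
    exact ⟨fun ⟨hp, d, hd, hl⟩ => ⟨d, hd, hp, hl⟩, fun ⟨d, hd, hp, hl⟩ => ⟨hp, d, hd, hl⟩⟩

lemma card_diamond_filter_collinear (m : ℕ) :
    #((diamond m).filter (fun p => ∃ d ∈ collisionDirections, d.2 * p.1 = d.1 * p.2)) =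
      1 + 4 * m + 4 * (m / 2) + 8 * (m / 3) := by
  have hcross : ∀ d ∈ collisionDirections, ∀ e ∈ collisionDirections, d ≠ e →
      d.1 * e.2 ≠ d.2 * e.1 := by
    decide
  have hcop : ∀ d ∈ collisionDirections, IsCoprime d.1 d.2 := by
    simp only [Int.isCoprime_iff_gcd_eq_one]
    decide
  have hdisj : (collisionDirections : Set (ℤ × ℤ)).PairwiseDisjoint (diamondRay m) := by
    intro d hd e he hde
    refine disjoint_left.mpr fun p hpd hpe => ?_
    simp only [diamondRay, mem_filter] at hpd hpe
    exact hpd.2.1 (Prod.ext_iff.mpr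
      (eq_zero_of_mul_eq_mul_of_mul_eq_mul hpd.2.2 hpe.2.2 (hcross d hd e he hde)))
  rw [diamond_filter_collinear, card_insert_of_notMem (by simp [diamondRay]),
    card_biUnion hdisj, sum_congr rfl fun d hd => card_diamondRay m (hcop d hd)]
  simp [collisionDirections]
  omega

theorem a3_three_mul_succ (m : ℕ) :
    a3 (3 * (m + 1)) + 2 * m + 4 * (m / 2) + 8 * (m / 3) = 2 * m ^ 2 := by
  have hsplit := card_filter_add_card_filter_not (s := diamond m)
    (p := fun p => ∃ d ∈ collisionDirections, d.2 * p.1 = d.1 * p.2)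
  rw [card_diamond_filter_collinear, ← magicParams, ← a3_three_mul_succ_eq_card,
    card_diamond] at hsplit
  linarith

theorem a3_formula_mod18_12_general (t : ℕ) (h : t % 18 = 12) :
    (a3 t : ℚ) = (2 * (t : ℚ) ^ 2 - 32 * (t : ℚ) + 96) / 9 := by
  obtain ⟨k, rfl⟩ : ∃ k, t = 3 * ((6 * k + 3) + 1) := ⟨t / 18, by omega⟩
  have hcount := a3_three_mul_succ (6 * k + 3)
  rw [show (6 * k + 3) / 2 = 3 * k + 1 by omega, show (6 * k + 3) / 3 = 2 * k + 1 by omega]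
    at hcount
  have hq : (a3 (3 * (6 * k + 3 + 1)) : ℚ) + 2 * (6 * k + 3) + 4 * (3 * k + 1) + 8 * (2 * k + 1)
      = 2 * (6 * k + 3) ^ 2 := by
    exact_mod_cast hcount
  rw [eq_div_iff (by norm_num)]
  push_cast
  linear_combination 9 * hq

theorem a3_formula_mod18_12 (t : ℕ) (ht : 0 < t) (h : t % 18 = 12) :
    (a3 t : ℚ) = (2 * (t : ℚ) ^ 2 - 32 * (t : ℚ) + 96) / 9 :=
  a3_formula_mod18_12_general t h
end

section
/- If t is a positive integer with t ≡ 15 (mod 18), then a₃(t) = (2t² − 32t + 102)/9. -/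
/-!
The middle row, the middle column and the two diagonals together cover every entry once and the
centre three more times, so `4t = 3t + 3·centre`: the centre is `c = t / 3`. With `a = M 0 0 - c`
and `b = M 0 2 - c` the line sums force the square to be

  c + a      c - a - b  c + b
  c - a + b  c          c + a - b
  c - b      c + a + b  c - a

Its entries are positive iff `|a| + |b| < c`, and pairwise distinct iff `(a, b)` avoids the eight
lines `a = 0`, `b = 0`, `a = ±b`, `a = ±2b`, `b = ±2a`. By sign symmetry the number of admissible
`(a, b)` is four times the number of `a, b ≥ 1` with `a + b < c` off the lines `a = b`, `a = 2b`,
`b = 2a`, that is `4 (C(c-1, 2) - ⌊(c-1)/2⌋ - 2⌊(c-1)/3⌋)`; for `t = 18m + 15` this is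
`8 (9m² + 7m + 1)`.
-/

open Finset

theorem IsMagicSquare3.three_mul_center {t : ℕ} {M : Matrix (Fin 3) (Fin 3) ℕ}
    (h : IsMagicSquare3 t M) : 3 * M 1 1 = t := by
  obtain ⟨-, -, hrow, hcol, hdiag, hanti⟩ := h
  have := hrow 0; have := hrow 1; have := hrow 2; have := hcol 1
  simp only [Fin.sum_univ_three] at *
  omega

namespace MagicSquare3

def positiveTriangle (c : ℕ) : Finset (ℕ × ℕ) :=
  {q ∈ Ioo 0 c ×ˢ Ioo 0 c | q.1 + q.2 < c}

lemma card_positiveTriangle (c : ℕ) : #(positiveTriangle c) = (c - 1).choose 2 := by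
  rw [show c - 1 = #(Ioo 0 c) by simp, ← card_product_filter_lt]
  refine card_nbij' (fun q => (q.1, q.1 + q.2)) (fun q => (q.1, q.2 - q.1)) ?_ ?_ ?_ ?_ <;>
    rintro ⟨a, b⟩ <;> simp [positiveTriangle] <;> omega

lemma card_filter_positiveTriangle_ray {u v : ℕ} (hu : 0 < u) (hv : 0 < v) (huv : u.Coprime v)
    (c : ℕ) : #{q ∈ positiveTriangle c | v * q.1 = u * q.2} = (c - 1) / (u + v) := by
  have hray : {q ∈ positiveTriangle c | v * q.1 = u * q.2}
      = (Icc 1 ((c - 1) / (u + v))).image fun k => (u * k, v * k) := by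
    ext ⟨a, b⟩
    simp only [positiveTriangle, mem_filter, mem_product, mem_Ioo, mem_image, mem_Icc,
      Prod.mk.injEq, Nat.le_div_iff_mul_le (by omega : 0 < u + v)]
    constructor
    · rintro ⟨⟨⟨⟨ha, -⟩, -, -⟩, hab⟩, hline⟩
      obtain ⟨k, rfl⟩ : u ∣ a := huv.dvd_of_dvd_mul_left ⟨b, hline⟩
      obtain rfl : b = v * k := by
        apply Nat.eq_of_mul_eq_mul_left hu; rw [← hline]; ring
      refine ⟨k, ⟨Nat.pos_of_mul_pos_left ha, ?_⟩, rfl, rfl⟩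
      rw [mul_add, mul_comm k, mul_comm k]
      omega
    · rintro ⟨k, ⟨hk, hkc⟩, rfl, rfl⟩
      rw [mul_add, mul_comm k, mul_comm k] at hkc
      have huk : 0 < u * k := by positivity
      have hvk : 0 < v * k := by positivity
      exact ⟨⟨⟨⟨huk, by omega⟩, hvk, by omega⟩, by omega⟩, by ring⟩
  have hinj : Function.Injective fun k => (u * k, v * k) := fun k l h =>
    Nat.eq_of_mul_eq_mul_left hu (congrArg Prod.fst h)
  rw [hray, card_image_of_injective _ hinj, Nat.card_Icc, Nat.add_sub_cancel]

def quadrantParams (c : ℕ) : Finset (ℕ × ℕ) :=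
  {q ∈ positiveTriangle c | q.1 ≠ q.2 ∧ q.1 ≠ 2 * q.2 ∧ 2 * q.1 ≠ q.2}

lemma card_quadrantParams (c : ℕ) :
    #(quadrantParams c) = (c - 1).choose 2 - (c - 1) / 2 - 2 * ((c - 1) / 3) := by
  have h11 := card_filter_positiveTriangle_ray one_pos one_pos (Nat.coprime_one_left 1) c
  have h21 := card_filter_positiveTriangle_ray two_pos one_pos (Nat.coprime_one_right 2) c
  have h12 := card_filter_positiveTriangle_ray one_pos two_pos (Nat.coprime_one_left 2) c
  simp only [one_mul] at h11 h21 h12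
  have hsplit := card_filter_add_card_filter_not (s := positiveTriangle c)
    (fun q => q.1 = q.2 ∨ q.1 = 2 * q.2 ∨ 2 * q.1 = q.2)
  rw [filter_or, filter_or, card_union_of_disjoint, card_union_of_disjoint, h11, h21, h12,
    card_positiveTriangle] at hsplit
  · simp only [not_or, ← ne_eq] at hsplit
    unfold quadrantParams
    omega
  all_goals grind [positiveTriangle, disjoint_filter, disjoint_union_right]

def signedPairs (q : ℕ × ℕ) : Finset (ℤ × ℤ) :=
  {(q.1 : ℤ), -(q.1 : ℤ)} ×ˢ {(q.2 : ℤ), -(q.2 : ℤ)}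

lemma mem_signedPairs {p : ℤ × ℤ} {q : ℕ × ℕ} :
    p ∈ signedPairs q ↔ (p.1.natAbs, p.2.natAbs) = q := by
  simp only [signedPairs, mem_product, mem_insert, mem_singleton, Prod.ext_iff, Int.natAbs_eq_iff]

lemma card_signedPairs {q : ℕ × ℕ} (h₁ : q.1 ≠ 0) (h₂ : q.2 ≠ 0) :
    #(signedPairs q) = 4 := by
  rw [signedPairs, card_product, card_pair (by omega), card_pair (by omega)]

def absPreimage (s : Finset (ℕ × ℕ)) : Finset (ℤ × ℤ) := s.biUnion signedPairs

lemma mem_absPreimage {s : Finset (ℕ × ℕ)} {p : ℤ × ℤ} :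
    p ∈ absPreimage s ↔ (p.1.natAbs, p.2.natAbs) ∈ s := by
  simp [absPreimage, mem_signedPairs]

lemma card_absPreimage {s : Finset (ℕ × ℕ)} (hs : ∀ q ∈ s, q.1 ≠ 0 ∧ q.2 ≠ 0) :
    #(absPreimage s) = 4 * #s := by
  rw [absPreimage, card_biUnion, sum_congr rfl fun q hq => card_signedPairs (hs q hq).1 (hs q hq).2,
    sum_const, smul_eq_mul, mul_comm]
  intro q _ q' _ hne
  exact disjoint_left.2 fun p hp hp' =>
    hne ((mem_signedPairs.1 hp).symm.trans (mem_signedPairs.1 hp'))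

def magicParams (c : ℕ) : Finset (ℤ × ℤ) := absPreimage (quadrantParams c)

lemma mem_magicParams {c : ℕ} {p : ℤ × ℤ} :
    p ∈ magicParams c ↔ 0 < p.1.natAbs ∧ 0 < p.2.natAbs ∧ p.1.natAbs + p.2.natAbs < c ∧
      p.1.natAbs ≠ p.2.natAbs ∧ p.1.natAbs ≠ 2 * p.2.natAbs ∧
      2 * p.1.natAbs ≠ p.2.natAbs := by
  simp only [magicParams, mem_absPreimage, quadrantParams, positiveTriangle, mem_filter,
    mem_product, mem_Ioo]
  omega

lemma card_magicParams (c : ℕ) :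
    #(magicParams c) = 4 * ((c - 1).choose 2 - (c - 1) / 2 - 2 * ((c - 1) / 3)) := by
  rw [magicParams, card_absPreimage, card_quadrantParams]
  intro q hq
  simp only [quadrantParams, positiveTriangle, mem_filter, mem_product, mem_Ioo] at hq
  omega

def ofParams (c : ℕ) (p : ℤ × ℤ) : Matrix (Fin 3) (Fin 3) ℕ :=
  !![(c + p.1).toNat, (c - p.1 - p.2).toNat, (c + p.2).toNat;
     (c - p.1 + p.2).toNat, c, (c + p.1 - p.2).toNat;
     (c - p.2).toNat, (c + p.1 + p.2).toNat, (c - p.1).toNat]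

def toParams (c : ℕ) (M : Matrix (Fin 3) (Fin 3) ℕ) : ℤ × ℤ := (M 0 0 - c, M 0 2 - c)

lemma isMagicSquare3_ofParams {c : ℕ} {p : ℤ × ℤ} (hp : p ∈ magicParams c) :
    IsMagicSquare3 (3 * c) (ofParams c p) := by
  obtain ⟨a, b⟩ := p
  rw [mem_magicParams] at hp
  refine ⟨?_, ?_, ?_, ?_, ?_, ?_⟩
  · intro i j
    fin_cases i <;> fin_cases j <;> simp [ofParams] <;> omega
  · intro x y hxy
    fin_cases x <;> fin_cases y <;> simp [ofParams] at hxy ⊢ <;> omega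
  · intro i
    fin_cases i <;> simp [ofParams, Fin.sum_univ_three] <;> omega
  · intro j
    fin_cases j <;> simp [ofParams, Fin.sum_univ_three] <;> omega
  · simp [ofParams]; omega
  · simp [ofParams]; omega

lemma toParams_ofParams {c : ℕ} {p : ℤ × ℤ} (hp : p ∈ magicParams c) :
    toParams c (ofParams c p) = p := by
  obtain ⟨a, b⟩ := p
  rw [mem_magicParams] at hp
  simp only [toParams, ofParams, Fin.isValue, Matrix.of_apply, Matrix.cons_val',
    Matrix.cons_val_zero, Matrix.cons_val_fin_one, Int.ofNat_toNat, Matrix.cons_val, Prod.mk.injEq]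
  omega

lemma ofParams_toParams {c : ℕ} {M : Matrix (Fin 3) (Fin 3) ℕ} (hM : IsMagicSquare3 (3 * c) M) :
    ofParams c (toParams c M) = M := by
  have hcenter := hM.three_mul_center
  obtain ⟨-, -, hrow, hcol, hdiag, hanti⟩ := hM
  have := hrow 0; have := hrow 1; have := hrow 2; have := hcol 0; have := hcol 1; have := hcol 2
  simp only [Fin.sum_univ_three] at *
  ext i j
  fin_cases i <;> fin_cases j <;> simp [ofParams, toParams] <;> omega

lemma mem_magicParams_of_isMagicSquare3 {t c : ℕ} {p : ℤ × ℤ}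
    (h : IsMagicSquare3 t (ofParams c p)) : p ∈ magicParams c := by
  obtain ⟨hpos, hinj, -⟩ := h
  have := hpos 0 1; have := hpos 1 0; have := hpos 1 2; have := hpos 2 1
  -- on each of the eight excluded lines one of these pairs of entries coincides
  have := hinj.ne (a₁ := (0, 0)) (a₂ := (1, 1)) (by decide)
  have := hinj.ne (a₁ := (0, 2)) (a₂ := (1, 1)) (by decide)
  have := hinj.ne (a₁ := (0, 0)) (a₂ := (0, 2)) (by decide)
  have := hinj.ne (a₁ := (0, 1)) (a₂ := (1, 1)) (by decide)
  have := hinj.ne (a₁ := (1, 2)) (a₂ := (0, 2)) (by decide)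
  have := hinj.ne (a₁ := (0, 1)) (a₂ := (0, 2)) (by decide)
  have := hinj.ne (a₁ := (1, 0)) (a₂ := (0, 0)) (by decide)
  have := hinj.ne (a₁ := (0, 1)) (a₂ := (0, 0)) (by decide)
  simp only [ofParams, Matrix.of_apply, Matrix.cons_val', Matrix.cons_val_fin_one, Fin.isValue,
    Matrix.cons_val_one, Matrix.cons_val_zero, Int.lt_toNat, CharP.cast_eq_zero, Int.sub_pos,
    Matrix.cons_val, ne_eq] at *
  rw [mem_magicParams]
  omega

lemma toParams_mem_magicParams {c : ℕ} {M : Matrix (Fin 3) (Fin 3) ℕ}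
    (hM : IsMagicSquare3 (3 * c) M) : toParams c M ∈ magicParams c := by
  rw [← ofParams_toParams hM] at hM
  exact mem_magicParams_of_isMagicSquare3 hM

lemma a3_three_mul_eq_card_magicParams (c : ℕ) : a3 (3 * c) = #(magicParams c) := by
  have hbij : Set.BijOn (ofParams c) (magicParams c) {M | IsMagicSquare3 (3 * c) M} :=
    Set.InvOn.bijOn ⟨fun _ hp => toParams_ofParams hp, fun _ hM => ofParams_toParams hM⟩
      (fun _ hp => isMagicSquare3_ofParams hp) (fun _ hM => toParams_mem_magicParams hM)
  rw [a3, ← hbij.ncard_eq, Set.ncard_coe_finset]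

theorem a3_three_mul (c : ℕ) :
    a3 (3 * c) = 4 * ((c - 1).choose 2 - (c - 1) / 2 - 2 * ((c - 1) / 3)) := by
  rw [a3_three_mul_eq_card_magicParams, card_magicParams]

end MagicSquare3

theorem a3_formula_mod18_15_general (t : ℕ) (h : t % 18 = 15) :
    (a3 t : ℚ) = (2 * (t : ℚ) ^ 2 - 32 * (t : ℚ) + 102) / 9 := by
  obtain ⟨m, rfl⟩ : ∃ m, t = 3 * (6 * m + 5) := ⟨t / 18, by omega⟩
  have hchoose : (6 * m + 4).choose 2 = 18 * m ^ 2 + 21 * m + 6 := by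
    rw [Nat.choose_two_right, show 6 * m + 4 - 1 = 6 * m + 3 by omega,
      show (6 * m + 4) * (6 * m + 3) = 2 * (18 * m ^ 2 + 21 * m + 6) by ring,
      Nat.mul_div_cancel_left _ two_pos]
  have hcount : a3 (3 * (6 * m + 5)) = 8 * (9 * m ^ 2 + 7 * m + 1) := by
    rw [MagicSquare3.a3_three_mul, show 6 * m + 5 - 1 = 6 * m + 4 by omega, hchoose]
    omega
  rw [hcount]
  push_cast
  ring

theorem a3_formula_mod18_15 (t : ℕ) (ht : 0 < t) (h : t % 18 = 15) :
    (a3 t : ℚ) = (2 * (t : ℚ) ^ 2 - 32 * (t : ℚ) + 102) / 9 :=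
  a3_formula_mod18_15_general t h
end
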